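/- If {A_k}_{k=1}^∞ ⊆ 𝓕 are pairwise disjoint with ν_N(A_k) ≤ ν(A_k) for all k, N ∈ ℕ, then ⋃_{k=1}^∞ A_k ∈ 𝓕 and ν(⋃_{k=1}^∞ A_k) = Σ_{k=1}^∞ ν(A_k). -/
import Mathlib


open Filter Set

/-- Partial average ν_N(A) = |A ∩ {1,…,N}| / N. -/
noncomputable def avg (A : Set ℕ) (N : ℕ) : ℝ := ((A ∩ Set.Icc 1 N).ncard : ℝ) / N

/-- Upper Cesàro limit ν⁺. -/
noncomputable def nuPlus (A : Set ℕ) : ℝ := Filter.limsup (avg A) Filter.atTop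

/-- Lower Cesàro limit ν⁻. -/
noncomputable def nuMinus (A : Set ℕ) : ℝ := Filter.liminf (avg A) Filter.atTop

/-- ν(A), defined as ν⁺(A); equals the Cesàro limit whenever it exists. -/
noncomputable def nu (A : Set ℕ) : ℝ := nuPlus A

/-- A ∈ 𝓕 : the Cesàro limit exists (and then equals ν(A) = ν⁺(A)). -/
def memF (A : Set ℕ) : Prop := Filter.Tendsto (avg A) Filter.atTop (nhds (nu A))

/-- A ∈ nhds : null set, Cesàro limit exists and equals 0. -/
def IsNull (A : Set ℕ) : Prop := Filter.Tendsto (avg A) Filter.atTop (nhds 0)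

lemma avg_nonneg' (A : Set ℕ) (N : ℕ) : 0 ≤ avg A N := by
  unfold avg; positivity

lemma ncard_Icc_one (N : ℕ) : (Set.Icc 1 N).ncard = N := by
  rw [← Finset.coe_Icc, Set.ncard_coe_finset, Nat.card_Icc]; omega

lemma avg_le_one' (A : Set ℕ) (N : ℕ) : avg A N ≤ 1 := by
  unfold avg
  rcases Nat.eq_zero_or_pos N with h | h
  · simp [h]
  · rw [div_le_one (by exact_mod_cast h)]
    have : (A ∩ Set.Icc 1 N).ncard ≤ N := by
      calc (A ∩ Set.Icc 1 N).ncard ≤ (Set.Icc 1 N).ncard :=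
            Set.ncard_le_ncard Set.inter_subset_right (Set.finite_Icc 1 N)
        _ = N := ncard_Icc_one N
    exact_mod_cast this

lemma ncard_biUnion_eq {s : ℕ → Set ℕ} (hfin : ∀ k, (s k).Finite)
    (hdisj : Pairwise (Function.onFun Disjoint s)) (F : Finset ℕ) :
    (⋃ k ∈ F, s k).ncard = ∑ k ∈ F, (s k).ncard := by
  classical
  induction F using Finset.induction_on with
  | empty => simp
  | @insert a F ha ih =>
    rw [Finset.sum_insert ha, ← ih, Finset.set_biUnion_insert]
    refine Set.ncard_union_eq ?_ (hfin a)
      (Set.Finite.biUnion F.finite_toSet fun k _ => hfin k)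
    refine Set.disjoint_iUnion₂_right.mpr fun k hk => hdisj fun h => ha ?_
    exact h ▸ hk

theorem stmt8 (A : ℕ → Set ℕ) (hdisj : Pairwise (Function.onFun Disjoint A))
    (hF : ∀ k, memF (A k)) (hbd : ∀ k N, avg (A k) N ≤ nu (A k)) :
    memF (⋃ k, A k) ∧ nu (⋃ k, A k) = ∑' k, nu (A k) := by
  classical
  set U := ⋃ k, A k with hU
  have hnu_nn : ∀ k, 0 ≤ nu (A k) := fun k =>
    ge_of_tendsto (hF k) (Eventually.of_forall fun N => avg_nonneg' _ N)
  have hdisj' : ∀ N : ℕ, Pairwise (Function.onFun Disjoint fun k => A k ∩ Set.Icc 1 N) :=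
    fun N i j hij => (hdisj hij).mono Set.inter_subset_left Set.inter_subset_left
  have key : ∀ (N : ℕ) (F : Finset ℕ),
      ∑ k ∈ F, avg (A k) N = ((⋃ k ∈ F, A k ∩ Set.Icc 1 N).ncard : ℝ) / N := by
    intro N F
    rw [ncard_biUnion_eq (fun k => (Set.finite_Icc 1 N).inter_of_right _) (hdisj' N) F]
    push_cast
    rw [Finset.sum_div]
    rfl
  have lower : ∀ (N : ℕ) (F : Finset ℕ), ∑ k ∈ F, avg (A k) N ≤ avg U N := by
    intro N F
    rw [key N F]
    have hsub : (⋃ k ∈ F, A k ∩ Set.Icc 1 N) ⊆ U ∩ Set.Icc 1 N := by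
      simp only [Set.iUnion_subset_iff]
      exact fun k _ => Set.inter_subset_inter (Set.subset_iUnion A k) subset_rfl
    have hfin : (U ∩ Set.Icc 1 N).Finite := (Set.finite_Icc 1 N).inter_of_right U
    have := Set.ncard_le_ncard hsub hfin
    unfold avg
    gcongr
  have hbdd : ∀ F : Finset ℕ, ∑ k ∈ F, nu (A k) ≤ 1 := by
    intro F
    have ht : Tendsto (fun N => ∑ k ∈ F, avg (A k) N) atTop (nhds (∑ k ∈ F, nu (A k))) :=
      tendsto_finset_sum F fun k _ => hF k
    exact le_of_tendsto ht (Eventually.of_forall fun N => (lower N F).trans (avg_le_one' U N))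
  have hsummable : Summable fun k => nu (A k) :=
    summable_of_sum_range_le hnu_nn fun n => hbdd (Finset.range n)
  set S := ∑' k, nu (A k) with hS
  have upper : ∀ N, avg U N ≤ S := by
    intro N
    have hfinU : (U ∩ Set.Icc 1 N).Finite := (Set.finite_Icc 1 N).inter_of_right U
    obtain ⟨T, hT⟩ : ∃ T : Finset ℕ, U ∩ Set.Icc 1 N ⊆ ⋃ k ∈ T, A k ∩ Set.Icc 1 N := by
      refine ⟨hfinU.toFinset.image
        (fun x => if hx : x ∈ U then (Set.mem_iUnion.mp hx).choose else 0), ?_⟩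
      intro x hx
      have hxU : x ∈ U := hx.1
      simp only [Set.mem_iUnion]
      refine ⟨(Set.mem_iUnion.mp hxU).choose, ?_, (Set.mem_iUnion.mp hxU).choose_spec, hx.2⟩
      refine Finset.mem_image.mpr ⟨x, hfinU.mem_toFinset.mpr hx, ?_⟩
      rw [dif_pos hxU]
    have step1 : avg U N ≤ ∑ k ∈ T, avg (A k) N := by
      rw [key N T]
      have hfinT : (⋃ k ∈ T, A k ∩ Set.Icc 1 N).Finite :=
        Set.Finite.biUnion T.finite_toSet fun k _ => (Set.finite_Icc 1 N).inter_of_right _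
      have := Set.ncard_le_ncard hT hfinT
      unfold avg
      gcongr
    calc avg U N ≤ ∑ k ∈ T, avg (A k) N := step1
      _ ≤ ∑ k ∈ T, nu (A k) := Finset.sum_le_sum fun k _ => hbd k N
      _ ≤ S := Summable.sum_le_tsum T (fun k _ => hnu_nn k) hsummable
  have hbdd_above : atTop.IsBoundedUnder (· ≤ ·) (avg U) :=
    isBoundedUnder_of ⟨1, fun N => avg_le_one' U N⟩
  have hbdd_below : atTop.IsBoundedUnder (· ≥ ·) (avg U) :=
    isBoundedUnder_of ⟨0, fun N => avg_nonneg' U N⟩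
  have hlimsup : limsup (avg U) atTop ≤ S :=
    limsup_le_of_le hbdd_below.isCoboundedUnder_le (Eventually.of_forall upper)
  have hliminf : S ≤ liminf (avg U) atTop := by
    refine Summable.tsum_le_of_sum_le hsummable fun F => ?_
    have ht : Tendsto (fun N => ∑ k ∈ F, avg (A k) N) atTop (nhds (∑ k ∈ F, nu (A k))) :=
      tendsto_finset_sum F fun k _ => hF k
    calc ∑ k ∈ F, nu (A k) = liminf (fun N => ∑ k ∈ F, avg (A k) N) atTop := ht.liminf_eq.symm
      _ ≤ liminf (avg U) atTop :=
        liminf_le_liminf (Eventually.of_forall fun N => lower N F)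
          (isBoundedUnder_of ⟨0, fun N => Finset.sum_nonneg fun k _ => avg_nonneg' (A k) N⟩)
          hbdd_above.isCoboundedUnder_ge
  have htends : Tendsto (avg U) atTop (nhds S) :=
    tendsto_of_le_liminf_of_limsup_le hliminf hlimsup hbdd_above hbdd_below
  have hnuU : nu U = S := htends.limsup_eq
  exact ⟨by show Tendsto (avg U) atTop (nhds (nu U)); rw [hnuU]; exact htends, hnuU⟩
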